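/- Let S ⊆ ℝⁿ, f : ℝⁿ → ℝ, h : ℝⁿ → ℝᵐ, and suppose x* ∈ S and λ ∈ ℝᵐ satisfy: h(x*) ≤ 0 componentwise, λ ≥ 0 componentwise, ⟨λ, h(x*)⟩ = 0, and f(x*) + ⟨λ, h(x*)⟩ ≤ f(x) + ⟨λ, h(x)⟩ for every x ∈ S. Let p : ℝᵐ → ℝ be a perturbation value function satisfying p(0) = f(x*) and, for every w ∈ ℝᵐ and every ε > 0, there exists x ∈ S with h(x) ≤ w componentwise and f(x) ≤ p(w) + ε. If p is differentiable at 0 with gradient g ∈ ℝᵐ, then g = −λ; that is, λ_j = −∂p(0)/∂w_j for every j. -/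
import Mathlib


open Matrix

/-- The continuous linear map `w ↦ ⟨g, w⟩` on `ℝᵐ`. -/
noncomputable def dotCLM {m : ℕ} (g : Fin m → ℝ) : (Fin m → ℝ) →L[ℝ] ℝ :=
  ∑ j, g j • ContinuousLinearMap.proj j

lemma dotCLM_apply {m : ℕ} (g v : Fin m → ℝ) : dotCLM g v = g ⬝ᵥ v := by
  simp [dotCLM, dotProduct, ContinuousLinearMap.sum_apply]

/-- Theorem 1 of the paper: if `(x*, λ)` is a KKT pair for the unperturbed problem
`min_{x ∈ S, h(x) ≤ 0} f(x)`, `p` is the perturbation value function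
(so `p(0) = f(x*)` and for any `w` and `ε > 0` there is an `ε`-suboptimal feasible
point of the `w`-perturbed problem), and `p` is differentiable at `0` with
gradient `g`, then `g = -λ`, i.e. `λ_j = -∂p(0)/∂w_j`. -/
theorem multiplier_eq_neg_gradient_of_value_function
    {n m : ℕ} (S : Set (Fin n → ℝ)) (f : (Fin n → ℝ) → ℝ)
    (h : (Fin n → ℝ) → (Fin m → ℝ))
    (xstar : Fin n → ℝ) (lam g : Fin m → ℝ)
    (p : (Fin m → ℝ) → ℝ)
    (hxS : xstar ∈ S) (hfeas : h xstar ≤ 0) (hlam : 0 ≤ lam)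
    (hcomp : lam ⬝ᵥ h xstar = 0)
    (hmin : ∀ x ∈ S, f xstar + lam ⬝ᵥ h xstar ≤ f x + lam ⬝ᵥ h x)
    (hp0 : p 0 = f xstar)
    (hpval : ∀ w : Fin m → ℝ, ∀ ε > 0, ∃ x ∈ S, h x ≤ w ∧ f x ≤ p w + ε)
    (hdiff : HasFDerivAt p (dotCLM g) 0) :
    g = -lam := by
  -- key inequality: p 0 ≤ p w + lam ⬝ᵥ w for all w
  have key : ∀ w : Fin m → ℝ, p 0 ≤ p w + lam ⬝ᵥ w := by
    intro w
    have hεle : ∀ ε > (0:ℝ), p 0 ≤ p w + lam ⬝ᵥ w + ε := by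
      intro ε hε
      obtain ⟨x, hxS', hxw, hxval⟩ := hpval w ε hε
      have h1 : lam ⬝ᵥ h x ≤ lam ⬝ᵥ w := by
        unfold dotProduct
        apply Finset.sum_le_sum
        intro j _
        exact mul_le_mul_of_nonneg_left (hxw j) (hlam j)
      have h2 : f xstar ≤ f x + lam ⬝ᵥ h x := by
        have := hmin x hxS'
        rwa [hcomp, add_zero] at this
      rw [hp0]; linarith
    by_contra hc
    push_neg at hc
    have := hεle ((p 0 - (p w + lam ⬝ᵥ w)) / 2) (by linarith)
    linarith
  -- q w := p w + lam ⬝ᵥ w has a global (hence local) min at 0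
  have hq : HasFDerivAt (fun w => p w + lam ⬝ᵥ w) (dotCLM g + dotCLM lam) 0 := by
    have h2 : HasFDerivAt (fun w : Fin m → ℝ => lam ⬝ᵥ w) (dotCLM lam) 0 := by
      have := (dotCLM lam).hasFDerivAt (x := (0 : Fin m → ℝ))
      convert this using 2 with w
      exact (dotCLM_apply lam w).symm
    exact hdiff.add h2
  have hmin0 : IsLocalMin (fun w => p w + lam ⬝ᵥ w) 0 := by
    apply IsMinOn.isLocalMin (s := Set.univ)
    · intro w _
      simpa [dotProduct] using key w
    · exact Filter.univ_mem
  have hzero : dotCLM g + dotCLM lam = 0 := hmin0.hasFDerivAt_eq_zero hq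
  funext j
  have := congrArg (fun L : (Fin m → ℝ) →L[ℝ] ℝ => L (Pi.single j 1)) hzero
  simp only [ContinuousLinearMap.add_apply, ContinuousLinearMap.zero_apply,
    dotCLM_apply] at this
  simp [dotProduct, Pi.single_apply, Finset.sum_ite_eq'] at this
  simp [Pi.neg_apply]
  linarith
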